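/- Let A ∈ ℝ^{m×n} (m ≤ n) with largest singular value σ₁ and smallest singular value σ_m, let ε > 0, and let 0 < λ ≤ σ_m² + ε. Then for every vector v ∈ ℝⁿ and every index set Ω ⊆ {1,…,n} with |Ω ∪ supp(v)| ≤ s, one has ‖((I − λ(AᵀA + εI)⁻¹AᵀA)v)_Ω‖₂ ≤ (δ_s + σ₁² − λσ₁²/(σ₁² + ε)) · ‖v‖₂, where δ_s is the restricted isometry constant of A of order s. -/

import Mathlib

open Matrix

/-- The Euclidean (ℓ₂) norm of a vector in ℝ^d. -/
noncomputable def l2 {d : ℕ} (v : Fin d → ℝ) : ℝ := Real.sqrt (∑ i, v i ^ 2)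

/-- The restricted isometry constant of order `k` of a matrix `A`: the smallest `δ ≥ 0`
such that `(1 - δ)‖x‖² ≤ ‖Ax‖² ≤ (1 + δ)‖x‖²` for all `k`-sparse vectors `x`. -/
noncomputable def RIC {m n : ℕ} (A : Matrix (Fin m) (Fin n) ℝ) (k : ℕ) : ℝ :=
  sInf {δ : ℝ | 0 ≤ δ ∧ ∀ x : Fin n → ℝ, (Function.support x).ncard ≤ k →
    (1 - δ) * l2 x ^ 2 ≤ l2 (A *ᵥ x) ^ 2 ∧ l2 (A *ᵥ x) ^ 2 ≤ (1 + δ) * l2 x ^ 2}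

section Aux

lemma l2_nonneg {d : ℕ} (v : Fin d → ℝ) : 0 ≤ l2 v := Real.sqrt_nonneg _

lemma l2_sq {d : ℕ} (v : Fin d → ℝ) : l2 v ^ 2 = ∑ i, v i ^ 2 :=
  Real.sq_sqrt (Finset.sum_nonneg fun _ _ => sq_nonneg _)

lemma l2_sq_eq_dot {d : ℕ} (v : Fin d → ℝ) : l2 v ^ 2 = v ⬝ᵥ v := by
  rw [l2_sq]; simp [dotProduct, sq]

lemma dot_self_nonneg {d : ℕ} (v : Fin d → ℝ) : 0 ≤ v ⬝ᵥ v := by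
  rw [← l2_sq_eq_dot]; positivity

lemma l2_pos {d : ℕ} {v : Fin d → ℝ} (hv : v ≠ 0) : 0 < l2 v := by
  rcases (l2_nonneg v).lt_or_eq with h | h
  · exact h
  · exfalso; apply hv
    have h2 : v ⬝ᵥ v = 0 := by rw [← l2_sq_eq_dot, ← h]; ring
    exact (dotProduct_self_eq_zero).mp h2

lemma dot_sym {d : ℕ} (M : Matrix (Fin d) (Fin d) ℝ) (hM : Mᵀ = M) (a b : Fin d → ℝ) :
    a ⬝ᵥ (M *ᵥ b) = b ⬝ᵥ (M *ᵥ a) := by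
  rw [dotProduct_mulVec]
  nth_rewrite 1 [← hM]
  rw [vecMul_transpose, dotProduct_comm]

/-- Polarization: a symmetric matrix with quadratic form bounded by `c‖x‖²` has
operator norm at most `c`. -/
lemma l2_mulVec_le {d : ℕ} (M : Matrix (Fin d) (Fin d) ℝ) (hM : Mᵀ = M) (c : ℝ)
    (hq : ∀ x : Fin d → ℝ, |x ⬝ᵥ (M *ᵥ x)| ≤ c * (x ⬝ᵥ x)) (x : Fin d → ℝ) :
    l2 (M *ᵥ x) ≤ c * l2 x := by
  by_cases hx : x = 0
  · subst hx
    simp only [mulVec_zero]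
    have : l2 (0 : Fin d → ℝ) = 0 := by simp [l2]
    rw [this]; simp
  have hxpos : 0 < l2 x := l2_pos hx
  set w := M *ᵥ x with hw
  by_cases hw0 : w = 0
  · rw [hw0]
    have : l2 (0 : Fin d → ℝ) = 0 := by simp [l2]
    rw [this]
    have hc : 0 ≤ c := by
      have := hq x
      rw [← hw, hw0] at this
      simp only [dotProduct_zero, abs_zero] at this
      have hxx : 0 < x ⬝ᵥ x := by nlinarith [l2_sq_eq_dot x]
      nlinarith
    positivity
  have hwpos : 0 < l2 w := l2_pos hw0
  set t : ℝ := l2 x / l2 w with ht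
  have htpos : 0 < t := div_pos hxpos hwpos
  set y : Fin d → ℝ := t • w with hy
  have key : 4 * (t * (w ⬝ᵥ w)) ≤ 4 * (c * (x ⬝ᵥ x)) := by
    have h1 := hq (x + y)
    have h2 := hq (x - y)
    have e1 : (x + y) ⬝ᵥ (M *ᵥ (x + y)) =
        x ⬝ᵥ (M *ᵥ x) + 2 * (y ⬝ᵥ (M *ᵥ x)) + y ⬝ᵥ (M *ᵥ y) := by
      rw [mulVec_add, dotProduct_add, add_dotProduct, add_dotProduct,
        dot_sym M hM x y]
      ring
    have e2 : (x - y) ⬝ᵥ (M *ᵥ (x - y)) =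
        x ⬝ᵥ (M *ᵥ x) - 2 * (y ⬝ᵥ (M *ᵥ x)) + y ⬝ᵥ (M *ᵥ y) := by
      rw [mulVec_sub, dotProduct_sub, sub_dotProduct, sub_dotProduct,
        dot_sym M hM x y]
      ring
    have e3 : y ⬝ᵥ (M *ᵥ x) = t * (w ⬝ᵥ w) := by
      rw [hy, smul_dotProduct, ← hw]; rfl
    have e4 : (x + y) ⬝ᵥ (x + y) + (x - y) ⬝ᵥ (x - y) = 2 * (x ⬝ᵥ x) + 2 * (y ⬝ᵥ y) := by
      rw [dotProduct_add, dotProduct_sub, add_dotProduct, add_dotProduct,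
        sub_dotProduct, sub_dotProduct, dotProduct_comm y x]
      ring
    have e5 : y ⬝ᵥ y = t ^ 2 * (w ⬝ᵥ w) := by
      rw [hy, smul_dotProduct, dotProduct_smul, smul_eq_mul, smul_eq_mul]; ring
    have e6 : t ^ 2 * (w ⬝ᵥ w) = x ⬝ᵥ x := by
      rw [← l2_sq_eq_dot, ← l2_sq_eq_dot, ht]
      field_simp
    have habs1 := (abs_le.mp h1).2
    have habs2 := (abs_le.mp h2).1
    rw [e1] at habs1
    rw [e2] at habs2
    have e4' : c * ((x + y) ⬝ᵥ (x + y)) + c * ((x - y) ⬝ᵥ (x - y)) =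
        2 * (c * (x ⬝ᵥ x)) + 2 * (c * (y ⬝ᵥ y)) := by linear_combination c * e4
    have e5' : c * (y ⬝ᵥ y) = c * (x ⬝ᵥ x) := by linear_combination c * e5 + c * e6
    linarith
  have key2 : t * (w ⬝ᵥ w) ≤ c * (x ⬝ᵥ x) := by linarith
  have e7 : t * (w ⬝ᵥ w) = l2 x * l2 w := by
    rw [← l2_sq_eq_dot, ht]
    field_simp
  have e8 : c * (x ⬝ᵥ x) = l2 x * (c * l2 x) := by
    rw [← l2_sq_eq_dot]; ring
  rw [e7, e8] at key2
  exact le_of_mul_le_mul_left key2 hxpos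

lemma RIC_mem {m n : ℕ} (A : Matrix (Fin m) (Fin n) ℝ) (k : ℕ) :
    0 ≤ RIC A k ∧ ∀ x : Fin n → ℝ, (Function.support x).ncard ≤ k →
      (1 - RIC A k) * l2 x ^ 2 ≤ l2 (A *ᵥ x) ^ 2 ∧
      l2 (A *ᵥ x) ^ 2 ≤ (1 + RIC A k) * l2 x ^ 2 := by
  set T := {δ : ℝ | 0 ≤ δ ∧ ∀ x : Fin n → ℝ, (Function.support x).ncard ≤ k →
    (1 - δ) * l2 x ^ 2 ≤ l2 (A *ᵥ x) ^ 2 ∧ l2 (A *ᵥ x) ^ 2 ≤ (1 + δ) * l2 x ^ 2} with hT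
  have hbdd : BddBelow T := ⟨0, fun δ hδ => hδ.1⟩
  have hne : T.Nonempty := by
    refine ⟨1 + ∑ i, ∑ j, A i j ^ 2, ?_, ?_⟩
    · positivity
    · intro x _
      have hAx : l2 (A *ᵥ x) ^ 2 ≤ (∑ i, ∑ j, A i j ^ 2) * l2 x ^ 2 := by
        rw [l2_sq, l2_sq, Finset.sum_mul]
        apply Finset.sum_le_sum
        intro i _
        have := Finset.sum_mul_sq_le_sq_mul_sq Finset.univ (fun j => A i j) x
        simpa [mulVec, dotProduct] using this
      constructor
      · have h0 : (0:ℝ) ≤ ∑ i, ∑ j, A i j ^ 2 := by positivity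
        have h2 : (0:ℝ) ≤ l2 (A *ᵥ x) ^ 2 := sq_nonneg _
        nlinarith [sq_nonneg (l2 x)]
      · nlinarith [sq_nonneg (l2 x)]
  have hclosed : IsClosed T := by
    have : T = Set.Ici (0:ℝ) ∩ ⋂ x : Fin n → ℝ,
        {δ : ℝ | (Function.support x).ncard ≤ k →
          (1 - δ) * l2 x ^ 2 ≤ l2 (A *ᵥ x) ^ 2 ∧ l2 (A *ᵥ x) ^ 2 ≤ (1 + δ) * l2 x ^ 2} := by
      ext δ
      simp [hT, Set.mem_iInter, Set.mem_setOf_eq]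
    rw [this]
    refine IsClosed.inter isClosed_Ici (isClosed_iInter fun x => ?_)
    by_cases h : (Function.support x).ncard ≤ k
    · simp only [h, forall_true_left]
      refine IsClosed.inter ?_ ?_
      · exact isClosed_le ((continuous_const.sub continuous_id).mul continuous_const)
          continuous_const
      · exact isClosed_le continuous_const
          ((continuous_const.add continuous_id).mul continuous_const)
    · simp only [h]
      simp
  have h := hclosed.csInf_mem hne hbdd
  have hR : RIC A k = sInf T := by rw [hT]; rfl
  rw [hR]
  exact h

lemma eig_transfer {m n : ℕ} (A : Matrix (Fin m) (Fin n) ℝ) (μ : ℝ) (hμ : μ ≠ 0)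
    (u : Fin n → ℝ) (hu : u ≠ 0) (h : (Aᵀ * A) *ᵥ u = μ • u) :
    μ ∈ spectrum ℝ (A * Aᵀ) := by
  set w := A *ᵥ u with hwdef
  have hw : (A * Aᵀ) *ᵥ w = μ • w := by
    rw [hwdef, mulVec_mulVec, Matrix.mul_assoc, ← mulVec_mulVec u A (Aᵀ * A), h,
      mulVec_smul]
  have hwne : w ≠ 0 := by
    intro h0
    have : (Aᵀ * A) *ᵥ u = 0 := by
      rw [← mulVec_mulVec, ← hwdef, h0, mulVec_zero]
    rw [h] at this
    exact hu (by simpa [hμ] using smul_eq_zero.mp this)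
  rw [← AlgEquiv.spectrum_eq (Matrix.toLinAlgEquiv' (R := ℝ) (n := Fin m))]
  apply Module.End.HasEigenvalue.mem_spectrum
  apply Module.End.hasEigenvalue_of_hasEigenvector (x := w)
  refine ⟨Module.End.mem_eigenspace_iff.mpr ?_, hwne⟩
  simpa using hw

lemma diag_conj {n : ℕ} (U : Matrix (Fin n) (Fin n) ℝ) (hU2 : Uᵀ * U = 1)
    (d1 d2 : Fin n → ℝ) :
    (U * diagonal d1 * Uᵀ) * (U * diagonal d2 * Uᵀ) =
      U * diagonal (fun i => d1 i * d2 i) * Uᵀ := by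
  simp only [Matrix.mul_assoc]
  rw [← Matrix.mul_assoc Uᵀ U, hU2, Matrix.one_mul, ← Matrix.mul_assoc (diagonal d1),
    diagonal_mul_diagonal]

lemma spectral_pack {n : ℕ} (G : Matrix (Fin n) (Fin n) ℝ) (hG : G.IsHermitian)
    (ε lam : ℝ) (hε : 0 < ε) (hGnn : ∀ i, 0 ≤ hG.eigenvalues i) :
    ∃ U : Matrix (Fin n) (Fin n) ℝ, U * Uᵀ = 1 ∧ Uᵀ * U = 1 ∧
      G - lam • ((G + ε • 1)⁻¹ * G) =
        U * diagonal (fun i =>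
          hG.eigenvalues i - lam * ((hG.eigenvalues i + ε)⁻¹ * hG.eigenvalues i)) * Uᵀ := by
  set e := hG.eigenvalues with he
  set U : Matrix (Fin n) (Fin n) ℝ := (hG.eigenvectorUnitary : Matrix (Fin n) (Fin n) ℝ) with hU
  have hstar : star U = Uᵀ := by
    rw [Matrix.star_eq_conjTranspose, conjTranspose_eq_transpose_of_trivial]
  have hU1 : U * Uᵀ = 1 := by
    rw [← hstar]; exact (Matrix.mem_unitaryGroup_iff).mp hG.eigenvectorUnitary.2
  have hU2 : Uᵀ * U = 1 := by
    rw [← hstar]; exact (Matrix.mem_unitaryGroup_iff').mp hG.eigenvectorUnitary.2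
  refine ⟨U, hU1, hU2, ?_⟩
  have hGd : G = U * diagonal e * Uᵀ := by
    have := hG.spectral_theorem
    rw [Unitary.conjStarAlgAut_apply] at this
    rw [← hstar]
    exact this
  have hεne : ∀ i, e i + ε ≠ 0 := fun i => by have := hGnn i; positivity
  have hHd : G + ε • 1 = U * diagonal (fun i => e i + ε) * Uᵀ := by
    have h2 : ε • (1 : Matrix (Fin n) (Fin n) ℝ) = U * (ε • 1) * Uᵀ := by
      rw [Matrix.mul_smul, Matrix.smul_mul, Matrix.mul_one, hU1]
    rw [hGd, h2, ← Matrix.add_mul, ← Matrix.mul_add, smul_one_eq_diagonal, ← diagonal_add]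
  have hHinv : (G + ε • 1)⁻¹ = U * diagonal (fun i => (e i + ε)⁻¹) * Uᵀ := by
    apply Matrix.inv_eq_right_inv
    rw [hHd, diag_conj U hU2]
    have : (fun i => (e i + ε) * (e i + ε)⁻¹) = fun _ => (1:ℝ) := by
      funext i; exact mul_inv_cancel₀ (hεne i)
    rw [this, diagonal_one, Matrix.mul_one, hU1]
  have hMd : (G + ε • 1)⁻¹ * G = U * diagonal (fun i => (e i + ε)⁻¹ * e i) * Uᵀ := by
    rw [hHinv]
    nth_rewrite 1 [hGd]
    rw [diag_conj U hU2]
  rw [hMd]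
  nth_rewrite 1 [hGd]
  rw [← Matrix.smul_mul, ← Matrix.mul_smul, ← Matrix.sub_mul, ← Matrix.mul_sub,
    ← diagonal_smul, ← diagonal_sub]
  have hfun : (lam • fun i => (e i + ε)⁻¹ * e i) = fun i => lam * ((e i + ε)⁻¹ * e i) := by
    funext i; simp
  rw [hfun]

lemma scalar_bound {b sm ε lam μ : ℝ} (hε : 0 < ε) (hlam : lam ≤ sm + ε)
    (hsm : 0 ≤ sm) (hsmb : sm ≤ b) (hμ : μ = 0 ∨ (sm ≤ μ ∧ μ ≤ b)) :
    0 ≤ μ - lam * ((μ + ε)⁻¹ * μ) ∧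
      μ - lam * ((μ + ε)⁻¹ * μ) ≤ b - lam * b / (b + ε) := by
  have hb : 0 ≤ b := le_trans hsm hsmb
  have hbε : 0 < b + ε := by linarith
  have hlb : lam ≤ b + ε := by linarith
  have e2 : b - lam * b / (b + ε) = b * (b + ε - lam) / (b + ε) := by field_simp
  rcases hμ with h0 | ⟨h1, h2⟩
  · subst h0
    constructor
    · simp
    · have hLHS : (0:ℝ) - lam * ((0 + ε)⁻¹ * 0) = 0 := by ring
      rw [hLHS, e2]
      exact div_nonneg (mul_nonneg hb (by linarith)) hbε.le
  · have hμ0 : 0 ≤ μ := le_trans hsm h1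
    have hμε : 0 < μ + ε := by linarith
    have hlμ : lam ≤ μ + ε := by linarith
    have e1 : μ - lam * ((μ + ε)⁻¹ * μ) = μ * (μ + ε - lam) / (μ + ε) := by
      field_simp
    rw [e1, e2]
    constructor
    · apply div_nonneg (mul_nonneg hμ0 (by linarith)) hμε.le
    · rw [div_le_div_iff₀ hμε hbε]
      have hkey : lam * ε ≤ (μ + ε) * (b + ε) := by
        nlinarith [mul_nonneg hμ0 hbε.le, mul_nonneg hε.le (sub_nonneg.2 hlb)]
      nlinarith [mul_nonneg (sub_nonneg.2 h2) (sub_nonneg.2 hkey)]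

lemma quad_diag {d : ℕ} (U : Matrix (Fin d) (Fin d) ℝ) (hU1 : U * Uᵀ = 1)
    (f : Fin d → ℝ) (y : Fin d → ℝ) :
    y ⬝ᵥ ((U * diagonal f * Uᵀ) *ᵥ y) = ∑ i, f i * ((Uᵀ *ᵥ y) i) ^ 2 ∧
      y ⬝ᵥ y = ∑ i, ((Uᵀ *ᵥ y) i) ^ 2 := by
  set z := Uᵀ *ᵥ y with hz
  have hdot : ∀ w : Fin d → ℝ, y ⬝ᵥ (U *ᵥ w) = z ⬝ᵥ w := by
    intro w
    rw [dotProduct_mulVec, hz, mulVec_transpose]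
  constructor
  · rw [← Matrix.mulVec_mulVec, ← Matrix.mulVec_mulVec, hdot]
    simp only [dotProduct, mulVec_diagonal]
    apply Finset.sum_congr rfl
    intro i _
    ring
  · have : y ⬝ᵥ y = y ⬝ᵥ ((U * Uᵀ) *ᵥ y) := by rw [hU1, one_mulVec]
    rw [this, ← Matrix.mulVec_mulVec, hdot]
    simp [dotProduct, sq]
    rfl

lemma l2_indicator_le {d : ℕ} (S : Set (Fin d)) (u : Fin d → ℝ) :
    l2 (S.indicator u) ≤ l2 u := by
  apply Real.sqrt_le_sqrt
  apply Finset.sum_le_sum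
  intro i _
  by_cases h : i ∈ S
  · rw [Set.indicator_of_mem h]
  · rw [Set.indicator_of_notMem h]
    simpa using sq_nonneg (u i)

lemma dot_indicator_le {d : ℕ} (S : Set (Fin d)) (x : Fin d → ℝ) :
    S.indicator x ⬝ᵥ S.indicator x ≤ x ⬝ᵥ x := by
  rw [← l2_sq_eq_dot, ← l2_sq_eq_dot, l2_sq, l2_sq]
  apply Finset.sum_le_sum
  intro i _
  by_cases h : i ∈ S
  · rw [Set.indicator_of_mem h]
  · rw [Set.indicator_of_notMem h]
    simpa using sq_nonneg (x i)

lemma combine_bound {a b t2 X dd cc : ℝ} (h1 : |a - b| ≤ dd * a) (h3 : 0 ≤ t2)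
    (h4 : t2 ≤ cc * a) (ha : 0 ≤ a) (haX : a ≤ X) (hd : 0 ≤ dd) (hc : 0 ≤ cc) :
    |a - b + t2| ≤ (dd + cc) * X := by
  obtain ⟨l, r⟩ := abs_le.mp h1
  rw [abs_le]
  constructor <;> nlinarith

end Aux

/-- Lemma 3.1(ii): for `0 < λ ≤ σ_m² + ε` and any `Ω` with `|Ω ∪ supp v| ≤ s`,
`‖((I - λ(AᵀA + εI)⁻¹AᵀA)v)_Ω‖₂ ≤ (δ_s + σ₁² - λσ₁²/(σ₁² + ε)) ‖v‖₂`.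
Here `σ₁², σ_m²` are the largest and smallest eigenvalues of `AAᵀ`. -/
theorem stmt5 {m n s : ℕ} (hmn : m ≤ n) (A : Matrix (Fin m) (Fin n) ℝ)
    (σ1 σm ε lam : ℝ) (hσ1 : 0 ≤ σ1) (hσm : 0 ≤ σm)
    (hσ1mem : σ1 ^ 2 ∈ spectrum ℝ (A * Aᵀ))
    (hσ1max : ∀ μ ∈ spectrum ℝ (A * Aᵀ), μ ≤ σ1 ^ 2)
    (hσmmem : σm ^ 2 ∈ spectrum ℝ (A * Aᵀ))
    (hσmmin : ∀ μ ∈ spectrum ℝ (A * Aᵀ), σm ^ 2 ≤ μ)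
    (hε : 0 < ε) (hlam0 : 0 < lam) (hlam : lam ≤ σm ^ 2 + ε)
    (v : Fin n → ℝ) (Ω : Set (Fin n)) (hΩ : (Ω ∪ Function.support v).ncard ≤ s) :
    l2 (Ω.indicator ((1 - lam • ((Aᵀ * A + ε • 1)⁻¹ * (Aᵀ * A))) *ᵥ v)) ≤
      (RIC A s + σ1 ^ 2 - lam * σ1 ^ 2 / (σ1 ^ 2 + ε)) * l2 v := by
  classical
  obtain ⟨hδ0, hRIP⟩ := RIC_mem A s
  set δ := RIC A s with hδdef
  set c' : ℝ := σ1 ^ 2 - lam * σ1 ^ 2 / (σ1 ^ 2 + ε) with hc'def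
  set G : Matrix (Fin n) (Fin n) ℝ := Aᵀ * A with hGdef
  set H : Matrix (Fin n) (Fin n) ℝ := G + ε • 1 with hHdef
  set B : Matrix (Fin n) (Fin n) ℝ := 1 - lam • (H⁻¹ * G) with hBdef
  set S : Set (Fin n) := Ω ∪ Function.support v with hSdef
  have hΩS : Ω ⊆ S := Set.subset_union_left
  have hvS : Function.support v ⊆ S := Set.subset_union_right
  have hσm1 : σm ^ 2 ≤ σ1 ^ 2 := hσ1max _ hσmmem
  have hc'0 : 0 ≤ c' := by
    have := (scalar_bound (b := σ1 ^ 2) (sm := σm ^ 2) (μ := σ1 ^ 2) hε hlam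
      (by positivity) hσm1 (Or.inr ⟨hσm1, le_refl _⟩)).2
    have he : σ1 ^ 2 - lam * ((σ1 ^ 2 + ε)⁻¹ * σ1 ^ 2) = c' := by
      rw [hc'def, div_eq_mul_inv]; ring
    rw [he] at this
    calc (0:ℝ) ≤ σ1 ^ 2 - lam * ((σ1 ^ 2 + ε)⁻¹ * σ1 ^ 2) :=
          (scalar_bound (b := σ1 ^ 2) (sm := σm ^ 2) (μ := σ1 ^ 2) hε hlam
            (by positivity) hσm1 (Or.inr ⟨hσm1, le_refl _⟩)).1
      _ = c' := he
  -- G is PSD hermitian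
  have hAH : Aᴴ = Aᵀ := conjTranspose_eq_transpose_of_trivial A
  have hGpsd : G.PosSemidef := by
    rw [hGdef, ← hAH]; exact posSemidef_conjTranspose_mul_self A
  have hGherm : G.IsHermitian := hGpsd.1
  have hGsym : Gᵀ = G := by
    have := hGherm
    rwa [Matrix.IsHermitian, conjTranspose_eq_transpose_of_trivial] at this
  set e := hGherm.eigenvalues with hedef
  have hGnn : ∀ i, 0 ≤ e i := fun i => hGpsd.eigenvalues_nonneg i
  have hebound : ∀ i, e i = 0 ∨ (σm ^ 2 ≤ e i ∧ e i ≤ σ1 ^ 2) := by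
    intro i
    by_cases h0 : e i = 0
    · exact Or.inl h0
    · refine Or.inr ?_
      have hne : (⇑(hGherm.eigenvectorBasis i) : Fin n → ℝ) ≠ 0 := by
        have := hGherm.eigenvectorBasis.orthonormal.ne_zero i
        intro hcon
        apply this
        ext j
        exact congrFun hcon j
      have hmem : e i ∈ spectrum ℝ (A * Aᵀ) :=
        eig_transfer A (e i) h0 _ hne (hGherm.mulVec_eigenvectorBasis i)
      exact ⟨hσmmin _ hmem, hσ1max _ hmem⟩
  -- H is posdef
  have hHherm : H.IsHermitian := by
    rw [hHdef, Matrix.IsHermitian, conjTranspose_add, hGherm.eq]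
    congr 1
    rw [conjTranspose_smul, conjTranspose_one]
    simp
  have hHsym : Hᵀ = H := by
    have := hHherm
    rwa [Matrix.IsHermitian, conjTranspose_eq_transpose_of_trivial] at this
  have hApos : ∀ x : Fin n → ℝ, x ⬝ᵥ (G *ᵥ x) = (A *ᵥ x) ⬝ᵥ (A *ᵥ x) := by
    intro x
    rw [hGdef, ← mulVec_mulVec, dotProduct_mulVec, vecMul_transpose]
  have hHpd : H.PosDef := by
    refine posDef_iff_dotProduct_mulVec.mpr ⟨hHherm, fun x hx => ?_⟩
    have hsx : star x = x := by
      funext i; simp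
    rw [hsx]
    have h1 : H *ᵥ x = G *ᵥ x + ε • x := by
      rw [hHdef, add_mulVec, smul_mulVec, one_mulVec]
    rw [h1, dotProduct_add, dotProduct_smul, smul_eq_mul, hApos]
    have hxx : 0 < x ⬝ᵥ x := by
      rcases (dot_self_nonneg x).lt_or_eq with h | h
      · exact h
      · exact absurd (dotProduct_self_eq_zero.mp h.symm) hx
    nlinarith [dot_self_nonneg (A *ᵥ x)]
  have hHdet : IsUnit H.det := hHpd.det_pos.ne'.isUnit
  -- commutation
  have hGH : G * H = H * G := by
    rw [hHdef, Matrix.mul_add, Matrix.add_mul, Matrix.mul_smul, Matrix.smul_mul,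
      Matrix.mul_one, Matrix.one_mul]
  have hcomm : H⁻¹ * G = G * H⁻¹ := by
    calc H⁻¹ * G = H⁻¹ * G * (H * H⁻¹) := by
          rw [Matrix.mul_nonsing_inv _ hHdet, Matrix.mul_one]
      _ = H⁻¹ * (H * G) * H⁻¹ := by
          rw [← hGH]; simp only [Matrix.mul_assoc]
      _ = G * H⁻¹ := by
          rw [← Matrix.mul_assoc, ← Matrix.mul_assoc, Matrix.nonsing_inv_mul _ hHdet,
            Matrix.one_mul]
  have hBsym : Bᵀ = B := by
    rw [hBdef, transpose_sub, transpose_one, transpose_smul, transpose_mul,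
      transpose_nonsing_inv, hHsym, hGsym, ← hcomm]
  -- spectral decomposition of G - lam • (H⁻¹ * G)
  obtain ⟨U, hU1, hU2, hMd⟩ := spectral_pack G hGherm ε lam hε hGnn
  rw [← hHdef] at hMd
  -- projection matrix
  set D : Matrix (Fin n) (Fin n) ℝ := diagonal (S.indicator (fun _ => (1:ℝ))) with hDdef
  have hDsym : Dᵀ = D := diagonal_transpose _
  have hDvec : ∀ x : Fin n → ℝ, D *ᵥ x = S.indicator x := by
    intro x
    funext i
    rw [hDdef, mulVec_diagonal]
    by_cases h : i ∈ S
    · rw [Set.indicator_of_mem h, Set.indicator_of_mem h, one_mul]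
    · rw [Set.indicator_of_notMem h, Set.indicator_of_notMem h, zero_mul]
  set M' : Matrix (Fin n) (Fin n) ℝ := D * B * D with hM'def
  have hM'sym : M'ᵀ = M' := by
    rw [hM'def, transpose_mul, transpose_mul, hDsym, hBsym]
    simp only [Matrix.mul_assoc]
  have hdotD : ∀ a b : Fin n → ℝ, a ⬝ᵥ (D *ᵥ b) = (D *ᵥ a) ⬝ᵥ b := by
    intro a b
    rw [dotProduct_mulVec, ← mulVec_transpose, hDsym]
  -- the quadratic form bound
  have hq : ∀ x : Fin n → ℝ, |x ⬝ᵥ (M' *ᵥ x)| ≤ (δ + c') * (x ⬝ᵥ x) := by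
    intro x
    set y : Fin n → ℝ := S.indicator x with hydef
    have hsupp : (Function.support y).ncard ≤ s := by
      refine le_trans (Set.ncard_le_ncard ?_ (S.toFinite)) hΩ
      rw [hydef]
      exact Set.support_indicator_subset
    have hyx : y ⬝ᵥ y ≤ x ⬝ᵥ x := dot_indicator_le S x
    have hyy : 0 ≤ y ⬝ᵥ y := dot_self_nonneg y
    -- main expansion
    have hexp : x ⬝ᵥ (M' *ᵥ x) =
        (y ⬝ᵥ y - (A *ᵥ y) ⬝ᵥ (A *ᵥ y)) + y ⬝ᵥ ((G - lam • (H⁻¹ * G)) *ᵥ y) := by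
      have h1 : M' *ᵥ x = D *ᵥ (B *ᵥ (D *ᵥ x)) := by
        rw [hM'def, ← Matrix.mulVec_mulVec, ← Matrix.mulVec_mulVec]
      rw [h1, hdotD, hDvec, ← hydef]
      have h2 : B *ᵥ y = y - lam • ((H⁻¹ * G) *ᵥ y) := by
        rw [hBdef, sub_mulVec, one_mulVec, smul_mulVec]
      have h3 : (G - lam • (H⁻¹ * G)) *ᵥ y = G *ᵥ y - lam • ((H⁻¹ * G) *ᵥ y) := by
        rw [sub_mulVec, smul_mulVec]
      rw [h2, h3, dotProduct_sub, dotProduct_sub, dotProduct_smul, hApos]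
      simp only [smul_eq_mul]
      ring
    -- RIP part
    have ht1 : |y ⬝ᵥ y - (A *ᵥ y) ⬝ᵥ (A *ᵥ y)| ≤ δ * (y ⬝ᵥ y) := by
      obtain ⟨hlow, hhigh⟩ := hRIP y hsupp
      rw [l2_sq_eq_dot, l2_sq_eq_dot] at hlow hhigh
      rw [abs_le]
      constructor <;> nlinarith
    -- spectral part
    have ht2 : 0 ≤ y ⬝ᵥ ((G - lam • (H⁻¹ * G)) *ᵥ y) ∧
        y ⬝ᵥ ((G - lam • (H⁻¹ * G)) *ᵥ y) ≤ c' * (y ⬝ᵥ y) := by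
      obtain ⟨hq1, hq2⟩ := quad_diag U hU1
        (fun i => e i - lam * ((e i + ε)⁻¹ * e i)) y
      rw [hMd, hq1, hq2]
      have hbound : ∀ i, 0 ≤ e i - lam * ((e i + ε)⁻¹ * e i) ∧
          e i - lam * ((e i + ε)⁻¹ * e i) ≤ c' := by
        intro i
        have := scalar_bound (b := σ1 ^ 2) (sm := σm ^ 2) (μ := e i) hε hlam
          (by positivity) hσm1 (hebound i)
        rw [← hc'def] at this
        exact this
      constructor
      · apply Finset.sum_nonneg
        intro i _
        exact mul_nonneg (hbound i).1 (sq_nonneg _)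
      · rw [Finset.mul_sum]
        apply Finset.sum_le_sum
        intro i _
        exact mul_le_mul_of_nonneg_right (hbound i).2 (sq_nonneg _)
    rw [hexp]
    exact combine_bound ht1 ht2.1 ht2.2 hyy hyx hδ0 hc'0
  -- assembly
  have hvfix : D *ᵥ v = v := by
    rw [hDvec]
    exact Set.indicator_eq_self.mpr hvS
  have hind : Ω.indicator (B *ᵥ v) = Ω.indicator (M' *ᵥ v) := by
    have h1 : M' *ᵥ v = D *ᵥ (B *ᵥ v) := by
      rw [hM'def, ← Matrix.mulVec_mulVec, ← Matrix.mulVec_mulVec, hvfix]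
    rw [h1, hDvec]
    funext i
    by_cases h : i ∈ Ω
    · rw [Set.indicator_of_mem h, Set.indicator_of_mem h,
        Set.indicator_of_mem (hΩS h)]
    · rw [Set.indicator_of_notMem h, Set.indicator_of_notMem h]
  calc l2 (Ω.indicator (B *ᵥ v)) = l2 (Ω.indicator (M' *ᵥ v)) := by rw [hind]
    _ ≤ l2 (M' *ᵥ v) := l2_indicator_le _ _
    _ ≤ (δ + c') * l2 v := l2_mulVec_le M' hM'sym (δ + c') hq v
    _ = (RIC A s + σ1 ^ 2 - lam * σ1 ^ 2 / (σ1 ^ 2 + ε)) * l2 v := by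
        rw [hδdef, hc'def]; ring
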